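/- arXiv:2601.21297 — 2 statements merged into one kernel-verified Lean document; each statement's English description precedes it below -/
import Mathlib

section
/- Let λ ≥ 0 and let φ, ψ : [0,∞) → ℝ be continuous at 0, with φ continuous on some interval [0,ε] (ε > 0) and ψ(0) ≤ φ(0). Define J_λ(t) := ∫₀ᵗ λ·e^(−λτ)·φ(τ) dτ + e^(−λt)·φ(t) and Q^λ_s := min{ inf_{t ∈ [0,s]} J_λ(t), ∫₀ˢ λ·e^(−λτ)·φ(τ) dτ + e^(−λs)·ψ(s) }. Then lim_{s → 0⁺} Q^λ_s = ψ(0). (This is the trajectory-wise form of the corollary that the discounted state-action safety value Q^λ_s(x,u) converges to the discounted safety value V^λ(x) as the duration s tends to zero.) -/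
/-!
The running cost `J` is continuous from the right at `0` with `J 0 = φ 0`, so its running
infimum over `[0, s]` tends to `φ 0`, while the terminal term tends to `ψ 0`; the minimum of the
two limits is `ψ 0` because `ψ 0 ≤ φ 0`.
-/

open Set Filter Topology MeasureTheory

section RunningInfimum

variable {α : Type*} [LinearOrder α] [TopologicalSpace α] [OrderTopology α] [NoMaxOrder α]

theorem Filter.Eventually.forall_Icc_nhdsGE {a : α} {p : α → Prop} (hp : ∀ᶠ t in 𝓝[≥] a, p t) :
    ∀ᶠ s in 𝓝[≥] a, ∀ t ∈ Icc a s, p t := by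
  obtain ⟨u, hau, hu⟩ := mem_nhdsGE_iff_exists_Ico_subset.1 hp
  filter_upwards [Ico_mem_nhdsGE hau] with s hs t ht
  exact hu ⟨ht.1, ht.2.trans_lt hs.2⟩

theorem ContinuousWithinAt.tendsto_sInf_image_Icc {f : α → ℝ} {a : α}
    (hf : ContinuousWithinAt f (Ici a) a) :
    Tendsto (fun s => sInf (f '' Icc a s)) (𝓝[≥] a) (𝓝 (f a)) := by
  have lower : ∀ c < f a, ∀ᶠ s in 𝓝[≥] a, ∀ y ∈ f '' Icc a s, c < y := fun c hc =>
    (hf.eventually (eventually_gt_nhds hc)).forall_Icc_nhdsGE.mono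
      fun _ hs => forall_mem_image.2 hs
  have mem_image : ∀ᶠ s in 𝓝[≥] a, f a ∈ f '' Icc a s :=
    eventually_mem_nhdsWithin.mono fun s hs => mem_image_of_mem f ⟨le_rfl, hs⟩
  refine tendsto_order.2 ⟨fun c hc => ?_, fun c hc => ?_⟩
  · obtain ⟨c', hcc', hc'⟩ := exists_between hc
    filter_upwards [lower c' hc', mem_image] with s hs hfa
    exact hcc'.trans_le (le_csInf ⟨_, hfa⟩ fun y hy => (hs y hy).le)
  · filter_upwards [lower (f a - 1) (by linarith), mem_image] with s hs hfa
    exact (csInf_le ⟨f a - 1, fun y hy => (hs y hy).le⟩ hfa).trans_lt hc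

end RunningInfimum

noncomputable def discountedCost (lam : ℝ) (φ g : ℝ → ℝ) (t : ℝ) : ℝ :=
  (∫ τ in (0:ℝ)..t, lam * Real.exp (-(lam * τ)) * φ τ) + Real.exp (-(lam * t)) * g t

theorem tendsto_discountedCost_nhdsGE {lam ε : ℝ} {φ g : ℝ → ℝ} (hε : 0 < ε)
    (hφ : IntervalIntegrable φ volume 0 ε) (hg : ContinuousWithinAt g (Ici 0) 0) :
    Tendsto (discountedCost lam φ g) (𝓝[≥] 0) (𝓝 (g 0)) := by
  have hint : IntervalIntegrable (fun τ => lam * Real.exp (-(lam * τ)) * φ τ) volume 0 ε :=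
    hφ.continuousOn_mul (by fun_prop)
  have hprim : ContinuousWithinAt (fun t => ∫ τ in (0:ℝ)..t, lam * Real.exp (-(lam * τ)) * φ τ)
      (Ici 0) 0 := by
    have := intervalIntegral.continuousOn_primitive_interval' hint left_mem_uIcc
    rw [uIcc_of_le hε.le] at this
    exact (this 0 (left_mem_Icc.2 hε.le)).mono_of_mem_nhdsWithin (Icc_mem_nhdsGE hε)
  have hexp : ContinuousWithinAt (fun t : ℝ => Real.exp (-(lam * t))) (Ici 0) 0 :=
    (by fun_prop : Continuous fun t : ℝ => Real.exp (-(lam * t))).continuousWithinAt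
  unfold discountedCost
  simpa using hprim.tendsto.add (hexp.tendsto.mul hg)

theorem discounted_state_action_value_tendsto_value_general
    (lam ε : ℝ) (hε : 0 < ε) (φ ψ : ℝ → ℝ)
    (hφ : ContinuousOn φ (Set.Icc 0 ε))
    (hφ0 : ContinuousWithinAt φ (Set.Ici 0) 0)
    (hψ0 : ContinuousWithinAt ψ (Set.Ici 0) 0)
    (h0 : ψ 0 ≤ φ 0)
    (J : ℝ → ℝ)
    (hJ : ∀ t, J t = (∫ τ in (0:ℝ)..t, lam * Real.exp (-(lam * τ)) * φ τ)
      + Real.exp (-(lam * t)) * φ t)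
    (Q : ℝ → ℝ)
    (hQ : ∀ s, Q s = min (sInf (J '' Set.Icc 0 s))
      ((∫ τ in (0:ℝ)..s, lam * Real.exp (-(lam * τ)) * φ τ)
        + Real.exp (-(lam * s)) * ψ s)) :
    Filter.Tendsto Q (nhdsWithin 0 (Set.Ioi 0)) (nhds (ψ 0)) := by
  obtain rfl : J = discountedCost lam φ φ := funext hJ
  obtain rfl : Q = fun s => min (sInf (discountedCost lam φ φ '' Icc 0 s))
      (discountedCost lam φ ψ s) := funext hQ
  have hφint : IntervalIntegrable φ volume 0 ε := hφ.intervalIntegrable_of_Icc hε.le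
  have hJ0 : discountedCost lam φ φ 0 = φ 0 := by simp [discountedCost]
  have hJc : ContinuousWithinAt (discountedCost lam φ φ) (Ici 0) 0 := by
    rw [ContinuousWithinAt, hJ0]
    exact tendsto_discountedCost_nhdsGE hε hφint hφ0
  have hQlim := hJc.tendsto_sInf_image_Icc.min
    (tendsto_discountedCost_nhdsGE (lam := lam) hε hφint hψ0)
  rw [hJ0, min_eq_right h0] at hQlim
  exact hQlim.mono_left (nhdsWithin_mono _ Ioi_subset_Ici_self)

/-- **Q^λ_s converges to V^λ as the duration s tends to zero (trajectory-wise form).**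
Let `λ ≥ 0` and `φ ψ : [0,∞) → ℝ` be continuous at `0`, with `φ` continuous on some
`[0,ε]` (`ε > 0`) and `ψ(0) ≤ φ(0)`. With
`J_λ(t) = ∫₀ᵗ λ·e^(−λτ)·φ(τ) dτ + e^(−λt)·φ(t)` and
`Q^λ_s = min { inf_{t ∈ [0,s]} J_λ(t), ∫₀ˢ λ·e^(−λτ)·φ(τ) dτ + e^(−λs)·ψ(s) }`,
we have `lim_{s → 0⁺} Q^λ_s = ψ(0)`. -/
theorem discounted_state_action_value_tendsto_value
    (lam ε : ℝ) (hlam : 0 ≤ lam) (hε : 0 < ε) (φ ψ : ℝ → ℝ)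
    (hφ : ContinuousOn φ (Set.Icc 0 ε))
    (hφ0 : ContinuousWithinAt φ (Set.Ici 0) 0)
    (hψ0 : ContinuousWithinAt ψ (Set.Ici 0) 0)
    (h0 : ψ 0 ≤ φ 0)
    (J : ℝ → ℝ)
    (hJ : ∀ t, J t = (∫ τ in (0:ℝ)..t, lam * Real.exp (-(lam * τ)) * φ τ)
      + Real.exp (-(lam * t)) * φ t)
    (Q : ℝ → ℝ)
    (hQ : ∀ s, Q s = min (sInf (J '' Set.Icc 0 s))
      ((∫ τ in (0:ℝ)..s, lam * Real.exp (-(lam * τ)) * φ τ)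
        + Real.exp (-(lam * s)) * ψ s)) :
    Filter.Tendsto Q (nhdsWithin 0 (Set.Ioi 0)) (nhds (ψ 0)) :=
  discounted_state_action_value_tendsto_value_general lam ε hε φ ψ hφ hφ0 hψ0 h0 J hJ Q hQ
end

section
/- Fix s > 0. Let φ : [0,∞) → ℝ be bounded and continuous, and for λ > 0 define J_λ(t) := ∫₀ᵗ λ·e^(−λτ)·φ(τ) dτ + e^(−λt)·φ(t). Let ψ_λ(s) be real numbers (for λ > 0) and ψ(s) a real number with ψ_λ(s) → ψ(s) as λ → 0⁺. Then min{ inf_{t ∈ [0,s]} J_λ(t), ∫₀ˢ λ·e^(−λτ)·φ(τ) dτ + e^(−λs)·ψ_λ(s) } → min{ inf_{t ∈ [0,s]} φ(t), ψ(s) } as λ → 0⁺. (This is the trajectory-wise form of the corollary that the discounted state-action safety value Q^λ_s converges to the undiscounted state-action safety value Q_s as the discount factor λ approaches zero.) -/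
/-!
On `[0, s]` we have `J_λ(t) - φ(t) = ∫₀ᵗ λ e^(-λτ) φ(τ) dτ + (e^(-λt) - 1) φ(t)`, and both terms
are bounded by `M (1 - e^(-λs))` when `|φ| ≤ M`. So `J_λ → φ` uniformly on `[0, s]`, and a
uniform perturbation moves the infimum by at most its size. In the second argument of the `min`,
the integral tends to `0` and `e^(-λs) → 1`; the `min` of the two limits is then the limit.
-/

open Real Filter Set Topology intervalIntegral

theorem integral_mul_exp_neg_mul (lam t : ℝ) :
    ∫ τ in (0:ℝ)..t, lam * exp (-(lam * τ)) = 1 - exp (-(lam * t)) := by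
  have hderiv (x : ℝ) : HasDerivAt (fun τ => -exp (-(lam * τ))) (lam * exp (-(lam * x))) x :=
    ((hasDerivAt_id x).const_mul lam).neg.exp.neg.congr_deriv (by simp; ring)
  rw [integral_eq_sub_of_hasDerivAt (fun x _ => hderiv x)
    ((by fun_prop : Continuous fun τ => lam * exp (-(lam * τ))).intervalIntegrable 0 t)]
  simp
  ring

-- No measurability of `φ` is needed: a non-integrable integrand has integral `0`.
theorem abs_integral_mul_exp_neg_mul_le {lam t M : ℝ} {φ : ℝ → ℝ} (hlam : 0 ≤ lam) (ht : 0 ≤ t)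
    (hM : ∀ τ ∈ Icc 0 t, |φ τ| ≤ M) :
    |∫ τ in (0:ℝ)..t, lam * exp (-(lam * τ)) * φ τ| ≤ M * (1 - exp (-(lam * t))) := by
  calc |∫ τ in (0:ℝ)..t, lam * exp (-(lam * τ)) * φ τ|
      ≤ ∫ τ in (0:ℝ)..t, M * (lam * exp (-(lam * τ))) := by
        rw [← Real.norm_eq_abs]
        refine norm_integral_le_of_norm_le ht (.of_forall fun τ hτ => ?_)
          ((by fun_prop : Continuous fun τ => M * (lam * exp (-(lam * τ)))).intervalIntegrable 0 t)
        rw [norm_mul, Real.norm_of_nonneg (by positivity), mul_comm M]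
        exact mul_le_mul_of_nonneg_left (hM τ (Ioc_subset_Icc_self hτ)) (by positivity)
    _ = M * (1 - exp (-(lam * t))) := by rw [integral_const_mul, integral_mul_exp_neg_mul]

theorem abs_integral_mul_exp_neg_mul_add_sub_le {lam t M : ℝ} {φ : ℝ → ℝ} (hlam : 0 ≤ lam)
    (ht : 0 ≤ t) (hM : ∀ τ ∈ Icc 0 t, |φ τ| ≤ M) :
    |(∫ τ in (0:ℝ)..t, lam * exp (-(lam * τ)) * φ τ) + exp (-(lam * t)) * φ t - φ t|
      ≤ 2 * M * (1 - exp (-(lam * t))) := by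
  have hexp : exp (-(lam * t)) ≤ 1 := exp_le_one_iff.mpr (by nlinarith)
  have hφt : |(exp (-(lam * t)) - 1) * φ t| ≤ M * (1 - exp (-(lam * t))) := by
    rw [abs_mul, abs_of_nonpos (by linarith), neg_sub, mul_comm]
    exact mul_le_mul_of_nonneg_right (hM t ⟨ht, le_rfl⟩) (by linarith)
  calc _ = |(∫ τ in (0:ℝ)..t, lam * exp (-(lam * τ)) * φ τ) + (exp (-(lam * t)) - 1) * φ t| := by
          ring_nf
    _ ≤ _ := (abs_add_le _ _).trans (by linarith [abs_integral_mul_exp_neg_mul_le hlam ht hM])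

theorem abs_sInf_image_sub_le {α : Type*} {K : Set α} {f g : α → ℝ} {ε : ℝ} (hK : K.Nonempty)
    (hg : BddBelow (g '' K)) (h : ∀ x ∈ K, |f x - g x| ≤ ε) :
    |sInf (f '' K) - sInf (g '' K)| ≤ ε := by
  have hf : BddBelow (f '' K) := by
    obtain ⟨m, hm⟩ := hg
    exact ⟨m - ε, forall_mem_image.2 fun x hx =>
      by linarith [hm (mem_image_of_mem g hx), (abs_le.1 (h x hx)).1]⟩
  have hfg : sInf (f '' K) - ε ≤ sInf (g '' K) :=
    le_csInf (hK.image g) (forall_mem_image.2 fun x hx => by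
      linarith [csInf_le hf (mem_image_of_mem f hx), (abs_le.1 (h x hx)).2])
  have hgf : sInf (g '' K) - ε ≤ sInf (f '' K) :=
    le_csInf (hK.image f) (forall_mem_image.2 fun x hx => by
      linarith [csInf_le hg (mem_image_of_mem g hx), (abs_le.1 (h x hx)).1])
  exact abs_sub_le_iff.2 ⟨by linarith, by linarith⟩

theorem tendsto_one_sub_exp_neg_mul (s : ℝ) :
    Tendsto (fun lam : ℝ => 1 - exp (-(lam * s))) (𝓝 0) (𝓝 0) := by
  simpa using ((by fun_prop : Continuous fun lam : ℝ => 1 - exp (-(lam * s))).tendsto 0)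

theorem tendsto_sInf_image_integral_mul_exp_neg_mul_add {s M : ℝ} {φ : ℝ → ℝ} (hs : 0 ≤ s)
    (hM : ∀ τ ∈ Icc 0 s, |φ τ| ≤ M) :
    Tendsto (fun lam : ℝ => sInf ((fun t : ℝ =>
        (∫ τ in (0:ℝ)..t, lam * exp (-(lam * τ)) * φ τ) + exp (-(lam * t)) * φ t) '' Icc 0 s))
      (𝓝[≥] 0) (𝓝 (sInf (φ '' Icc 0 s))) := by
  have hM0 : 0 ≤ M := (abs_nonneg _).trans (hM 0 ⟨le_rfl, hs⟩)
  have hbdd : BddBelow (φ '' Icc 0 s) :=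
    ⟨-M, forall_mem_image.2 fun t ht => neg_le_of_abs_le (hM t ht)⟩
  rw [← tendsto_sub_nhds_zero_iff]
  refine squeeze_zero_norm' ?_ (by
    simpa using ((tendsto_one_sub_exp_neg_mul s).const_mul (2 * M)).mono_left nhdsWithin_le_nhds)
  filter_upwards [self_mem_nhdsWithin] with lam (hlam : 0 ≤ lam)
  refine abs_sInf_image_sub_le ⟨0, le_rfl, hs⟩ hbdd fun t ht => ?_
  have hts : exp (-(lam * s)) ≤ exp (-(lam * t)) := exp_le_exp.2 (by nlinarith [ht.2])
  calc _ ≤ 2 * M * (1 - exp (-(lam * t))) := abs_integral_mul_exp_neg_mul_add_sub_le hlam ht.1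
          fun τ hτ => hM τ ⟨hτ.1, hτ.2.trans ht.2⟩
    _ ≤ 2 * M * (1 - exp (-(lam * s))) := by gcongr

theorem tendsto_integral_mul_exp_neg_mul {s M : ℝ} {φ : ℝ → ℝ} (hs : 0 ≤ s)
    (hM : ∀ τ ∈ Icc 0 s, |φ τ| ≤ M) :
    Tendsto (fun lam : ℝ => ∫ τ in (0:ℝ)..s, lam * exp (-(lam * τ)) * φ τ) (𝓝[≥] 0) (𝓝 0) := by
  refine squeeze_zero_norm' ?_ (by
    simpa using ((tendsto_one_sub_exp_neg_mul s).const_mul M).mono_left nhdsWithin_le_nhds)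
  filter_upwards [self_mem_nhdsWithin] with lam (hlam : 0 ≤ lam)
  exact abs_integral_mul_exp_neg_mul_le hlam hs hM

theorem discounted_Q_tendsto_undiscounted_Q_general
    (s : ℝ) (hs : 0 < s) (φ : ℝ → ℝ)
    (hφb : ∃ M, ∀ t, 0 ≤ t → |φ t| ≤ M)
    (ψlam : ℝ → ℝ) (ψs : ℝ)
    (hψ : Filter.Tendsto ψlam (nhdsWithin 0 (Set.Ioi 0)) (nhds ψs)) :
    Filter.Tendsto
      (fun lam : ℝ =>
        min
          (sInf ((fun t : ℝ =>
            (∫ τ in (0:ℝ)..t, lam * Real.exp (-(lam * τ)) * φ τ)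
              + Real.exp (-(lam * t)) * φ t) '' Set.Icc 0 s))
          ((∫ τ in (0:ℝ)..s, lam * Real.exp (-(lam * τ)) * φ τ)
            + Real.exp (-(lam * s)) * ψlam lam))
      (nhdsWithin 0 (Set.Ioi 0))
      (nhds (min (sInf (φ '' Set.Icc 0 s)) ψs)) := by
  obtain ⟨M, hM⟩ := hφb
  have hMs : ∀ τ ∈ Icc 0 s, |φ τ| ≤ M := fun τ hτ => hM τ hτ.1
  have hpos : 𝓝[>] (0 : ℝ) ≤ 𝓝[≥] 0 := nhdsWithin_mono _ Ioi_subset_Ici_self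
  have hexp : Tendsto (fun lam : ℝ => exp (-(lam * s))) (𝓝[>] 0) (𝓝 1) :=
    ((by fun_prop : Continuous fun lam : ℝ => exp (-(lam * s))).tendsto' 0 1 (by simp)).mono_left
      nhdsWithin_le_nhds
  have htail := ((tendsto_integral_mul_exp_neg_mul hs.le hMs).mono_left hpos).add (hexp.mul hψ)
  rw [zero_add, one_mul] at htail
  exact ((tendsto_sInf_image_integral_mul_exp_neg_mul_add hs.le hMs).mono_left hpos).min htail

/-- **Q^λ_s converges to Q_s as λ → 0⁺ (trajectory-wise form).**
Fix `s > 0`, let `φ : [0,∞) → ℝ` be bounded and continuous, and set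
`J_λ(t) = ∫₀ᵗ λ·e^(−λτ)·φ(τ) dτ + e^(−λt)·φ(t)`. If the reals `ψ_λ(s)` converge to
`ψ(s)` as `λ → 0⁺`, then
`min { inf_{t ∈ [0,s]} J_λ(t), ∫₀ˢ λ·e^(−λτ)·φ(τ) dτ + e^(−λs)·ψ_λ(s) }`
converges to `min { inf_{t ∈ [0,s]} φ(t), ψ(s) }` as `λ → 0⁺`. -/
theorem discounted_Q_tendsto_undiscounted_Q
    (s : ℝ) (hs : 0 < s) (φ : ℝ → ℝ)
    (hφb : ∃ M, ∀ t, 0 ≤ t → |φ t| ≤ M)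
    (hφc : ContinuousOn φ (Set.Ici 0))
    (ψlam : ℝ → ℝ) (ψs : ℝ)
    (hψ : Filter.Tendsto ψlam (nhdsWithin 0 (Set.Ioi 0)) (nhds ψs)) :
    Filter.Tendsto
      (fun lam : ℝ =>
        min
          (sInf ((fun t : ℝ =>
            (∫ τ in (0:ℝ)..t, lam * Real.exp (-(lam * τ)) * φ τ)
              + Real.exp (-(lam * t)) * φ t) '' Set.Icc 0 s))
          ((∫ τ in (0:ℝ)..s, lam * Real.exp (-(lam * τ)) * φ τ)
            + Real.exp (-(lam * s)) * ψlam lam))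
      (nhdsWithin 0 (Set.Ioi 0))
      (nhds (min (sInf (φ '' Set.Icc 0 s)) ψs)) :=
  discounted_Q_tendsto_undiscounted_Q_general s hs φ hφb ψlam ψs hψ
end
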